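/- arXiv:1707.06080 — 2 statements merged into one kernel-verified Lean document; each statement's English description precedes it below -/
import Mathlib

section
/- Let α be irrational with denominators (q_n), let F = 1_{[0,1/2)} − 1_{[1/2,1)} on the circle ℝ/ℤ, and let F^{(q_n)}(x) = ∑_{j=0}^{q_n−1} F(x + jα mod 1). If q_n is odd and q_n·‖q_n α‖ < 1/2, then F^{(q_n)}(x) ∈ {−1, +1} for all x. -/
/-!
Let `q = 2k + 1` and write `q α = p + β` with `p = round (q α)`, so that `q |β| < 1/2`. Then `p`
is coprime to `q`: for `q ≥ 2`, both `p` and the numerator `p_n` lie within `3/4` of `q α`, so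
`p = p_n`. Modulo one, `x + jα ≡ (r_j + c + jβ) / q`, where `c = fract (q x)` and
`r_j ≡ ⌊q x⌋ + j p (mod q)` runs through all residues, while every `c + jβ` lies, after a common
integer shift, in `[0, 3/2)`. So `k` consecutive residues put at least `k` of the points `x + jα`
into `[0, 1/2)`, for every `x`. Translating `x` by `1/2` swaps the two halves of the circle, so
that count is `k` or `k + 1`, and the Birkhoff sum `2 · count - q` is `±1`.
-/

/-- The distance from a real number to the nearest integer. -/
noncomputable def distInt (x : ℝ) : ℝ := ⨅ m : ℤ, |x - m|

/-- The function `F = 1_{[0,1/2)} - 1_{[1/2,1)}` on the circle, as a 1-periodic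
function on `ℝ`. -/
noncomputable def Fhalf (x : ℝ) : ℝ := if Int.fract x < 1/2 then 1 else -1

open Finset

lemma distInt_eq_abs_sub_round (x : ℝ) : distInt x = |x - round x| :=
  le_antisymm (ciInf_le ⟨0, by rintro _ ⟨m, rfl⟩; exact abs_nonneg _⟩ (round x))
    (le_ciInf (round_le x))

namespace GenContFract

open GenContFract (of)

variable {K : Type*} [Field K] [LinearOrder K] [FloorRing K]

theorem exists_int_eq_contsAux (v : K) (m : ℕ) :
    ∃ a b : ℤ, (of v).contsAux m = ⟨a, b⟩ := by
  induction m using Nat.twoStepInduction with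
  | zero => exact ⟨1, 0, by simp [zeroth_contAux_eq_one_zero]⟩
  | one => exact ⟨⌊v⌋, 1, by simp [first_contAux_eq_h_one, of_h_eq_floor]⟩
  | more m ih₀ ih₁ =>
    rcases hs : (of v).s.get? m with _ | gp
    · rw [contsAux_stable_step_of_terminated hs]
      exact ih₁
    · obtain ⟨a₀, b₀, h₀⟩ := ih₀
      obtain ⟨a₁, b₁, h₁⟩ := ih₁
      obtain ⟨ha, z, hz⟩ := of_partNum_eq_one_and_exists_int_partDen_eq hs
      refine ⟨z * a₁ + a₀, z * b₁ + b₀, ?_⟩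
      rw [contsAux_recurrence hs h₀ h₁, ha, hz]
      push_cast
      simp only [one_mul]

theorem exists_isCoprime_num_den {v : K} {n : ℕ} (hn : ¬(of v).TerminatedAt n) :
    ∃ a b : ℤ, (of v).nums n = a ∧ (of v).dens n = b ∧ IsCoprime a b := by
  obtain ⟨a, b, hab⟩ := exists_int_eq_contsAux v (n + 1)
  obtain ⟨a', b', hab'⟩ := exists_int_eq_contsAux v (n + 2)
  have hdet := SimpContFract.determinant (s := SimpContFract.of v) hn
  simp only [SimpContFract.of, num_eq_conts_a, den_eq_conts_b, nth_cont_eq_succ_nth_contAux,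
    hab, hab'] at hdet ⊢
  have hdet' : a * b' - b * a' = (-1) ^ (n + 1) := by exact_mod_cast hdet
  have hsq : ((-1 : ℤ) ^ (n + 1)) ^ 2 = 1 := by rw [← pow_mul, pow_mul', neg_one_sq, one_pow]
  exact ⟨a, b, rfl, rfl, (-1) ^ (n + 1) * b', -((-1) ^ (n + 1) * a'),
    by linear_combination (-1) ^ (n + 1) * hdet' + hsq⟩

variable [IsStrictOrderedRing K]

theorem one_le_of_den (v : K) (n : ℕ) : 1 ≤ (of v).dens n := by
  induction n with
  | zero => rw [zeroth_den_eq_one]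
  | succ n ih => exact ih.trans of_den_mono

theorem abs_den_mul_sub_num_le {v : K} {n : ℕ} (hn : ¬(of v).TerminatedAt n) :
    |(of v).dens n * v - (of v).nums n| ≤ 1 / (of v).dens (n + 1) := by
  have hconv := abs_sub_convs_le hn
  rw [conv_eq_num_div_den] at hconv
  have hd := one_le_of_den v n
  have hd' := one_le_of_den v (n + 1)
  calc |(of v).dens n * v - (of v).nums n|
      = |(of v).dens n * (v - (of v).nums n / (of v).dens n)| := by congr 1; field_simp
    _ = (of v).dens n * |v - (of v).nums n / (of v).dens n| := by
      rw [abs_mul, abs_of_pos (by positivity)]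
    _ ≤ (of v).dens n * (1 / ((of v).dens n * (of v).dens (n + 1))) := by gcongr
    _ = 1 / (of v).dens (n + 1) := by field_simp

theorem isCoprime_round_mul_den {v : K} {n q : ℕ} (hn : ¬(of v).TerminatedAt n)
    (hq : (q : K) = (of v).dens n) (hsmall : q * |q * v - round (q * v)| < 1 / 2) :
    IsCoprime (round (q * v)) (q : ℤ) := by
  obtain ⟨a, b, hnum, hden, hab⟩ := exists_isCoprime_num_den hn
  obtain rfl : b = q := by exact_mod_cast hden.symm.trans hq.symm
  have hq₁ : 1 ≤ q := by exact_mod_cast hq ▸ one_le_of_den v n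
  rcases hq₁.eq_or_lt with rfl | hlt
  · exact isCoprime_one_right
  suffices round (q * v) = a by rwa [this]
  have hq₂ : (2 : K) ≤ q := by exact_mod_cast hlt
  have hconv : |(q : K) * v - a| ≤ 1 / 2 := by
    have hnext : (2 : K) ≤ (of v).dens (n + 1) := hq₂.trans (hq ▸ of_den_mono)
    calc |(q : K) * v - a| ≤ 1 / (of v).dens (n + 1) := hq ▸ hnum ▸ abs_den_mul_sub_num_le hn
      _ ≤ 1 / 2 := by gcongr
  have hround : |(q : K) * v - round (q * v)| < 1 / 4 := by
    nlinarith [abs_nonneg ((q : K) * v - round (q * v))]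
  have hdiff : |(round ((q : K) * v) : K) - a| < 1 :=
    calc |(round ((q : K) * v) : K) - a|
        ≤ |(round ((q : K) * v) : K) - q * v| + |(q : K) * v - a| := abs_sub_le _ _ _
      _ < 1 := by rw [abs_sub_comm]; linarith
  exact sub_eq_zero.mp (Int.abs_lt_one_iff.mp (by exact_mod_cast hdiff))

end GenContFract

lemma Irrational.not_terminatedAt_of {α : ℝ} (hα : Irrational α) (n : ℕ) :
    ¬(GenContFract.of α).TerminatedAt n := fun h ↦ by
  obtain ⟨r, hr⟩ := (GenContFract.terminates_iff_rat α).mp ⟨n, h⟩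
  exact hα ⟨r, hr.symm⟩

noncomputable def lowerHalfCount (α : ℝ) (q : ℕ) (x : ℝ) : ℕ :=
  #((range q).filter fun j : ℕ => Int.fract (x + j * α) < 1 / 2)

lemma exists_int_forall_add_mul_mem_Ico {c β : ℝ} {q : ℕ} (hc₀ : 0 ≤ c) (hc₁ : c < 1)
    (hβ : q * |β| < 1 / 2) :
    ∃ a : ℤ, ∀ j < q, a + c + j * β ∈ Set.Ico (0 : ℝ) (3 / 2) := by
  have hjβ : ∀ j < q, |(j : ℝ) * β| < 1 / 2 := fun j hj ↦ by
    rw [abs_mul, Nat.abs_cast]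
    exact lt_of_le_of_lt (by gcongr) hβ
  by_cases hpos : ∀ j < q, 0 ≤ c + j * β
  · refine ⟨0, fun j hj => ⟨by simpa using hpos j hj, ?_⟩⟩
    have := (abs_lt.mp (hjβ j hj)).2
    push_cast
    linarith
  · push Not at hpos
    obtain ⟨j₀, hj₀, hneg⟩ := hpos
    -- some point fell below `0`, so `β < 0` and `c` is small: shift everything up by one
    have hβneg : β < 0 := by
      by_contra! h
      nlinarith [mul_nonneg (Nat.cast_nonneg (α := ℝ) j₀) h]
    refine ⟨1, fun j hj => ⟨?_, ?_⟩⟩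
    · have := (abs_lt.mp (hjβ j hj)).1
      push_cast
      linarith
    · have := (abs_lt.mp (hjβ j₀ hj₀)).1
      have : (j : ℝ) * β ≤ 0 := mul_nonpos_of_nonneg_of_nonpos (Nat.cast_nonneg j) hβneg.le
      push_cast
      linarith

lemma exists_nat_lt_mul_add_modEq {p : ℤ} {q : ℕ} (hpq : IsCoprime p q) (hq : 0 < q)
    (N m : ℤ) : ∃ j < q, (j : ℤ) * p + N ≡ m [ZMOD q] := by
  obtain ⟨u, w, huw⟩ := hpq
  set t := (m - N) * u
  have ht : 0 ≤ t % q := Int.emod_nonneg t (by omega)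
  have htq : t % q < q := Int.emod_lt_of_pos t (by omega)
  refine ⟨(t % q).toNat, by omega, ?_⟩
  rw [Int.toNat_of_nonneg ht]
  refine (((Int.mod_modEq t q).mul_right p).add_right N).trans (Int.modEq_iff_dvd.mpr ?_)
  exact ⟨(m - N) * w, by linear_combination -(m - N) * huw⟩

lemma Int.fract_add_mul_eq_div {x α β c : ℝ} {p N r : ℤ} {q j : ℕ} (hq : 0 < q)
    (hx : q * x = N + c) (hα : q * α = p + β) (hj : (j : ℤ) * p + N ≡ r [ZMOD q])
    (h₀ : 0 ≤ r + c + j * β) (h₁ : r + c + j * β < q) :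
    Int.fract (x + j * α) = (r + c + j * β) / q := by
  have hq' : (0 : ℝ) < q := by exact_mod_cast hq
  obtain ⟨t, ht⟩ := hj.dvd
  refine Int.fract_eq_iff.mpr ⟨by positivity, (div_lt_one hq').mpr h₁, -t, ?_⟩
  have ht' : (r : ℝ) - (j * p + N) = q * t := by exact_mod_cast ht
  push_cast
  field_simp
  linear_combination hx + j * hα - ht'

lemma le_lowerHalfCount {α : ℝ} {p : ℤ} {k : ℕ} (hpq : IsCoprime p (2 * k + 1 : ℕ))
    (hβ : (2 * k + 1 : ℕ) * |(2 * k + 1 : ℕ) * α - p| < 1 / 2) (x : ℝ) :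
    k ≤ lowerHalfCount α (2 * k + 1) x := by
  set q := 2 * k + 1 with hq
  set β := q * α - p
  obtain ⟨a, ha⟩ := exists_int_forall_add_mul_mem_Ico (Int.fract_nonneg (q * x))
    (Int.fract_lt_one (q * x)) hβ
  choose j hjq hj using
    fun i : ℕ ↦ exists_nat_lt_mul_add_modEq hpq (by omega) ⌊q * x⌋ (a + i)
  refine le_card_of_inj_on_range j (fun i hi ↦ mem_filter.mpr ⟨mem_range.mpr (hjq i), ?_⟩)
    (fun i hi i' hi' hii' ↦ ?_)
  · obtain ⟨h₀, h₁⟩ := ha (j i) (hjq i)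
    have hi' : (i : ℝ) + 1 ≤ k := by exact_mod_cast hi
    have hq' : (q : ℝ) = 2 * k + 1 := by push_cast [hq]; ring
    have hfract := Int.fract_add_mul_eq_div (α := α) (β := β) (r := a + i) (by omega)
      (Int.floor_add_fract (q * x)).symm (add_sub_cancel _ _).symm (hj i)
      (by push_cast; linarith) (by push_cast; linarith)
    rw [hfract, div_lt_iff₀ (by positivity)]
    push_cast
    linarith
  · have h := ((hj i).symm.trans (hii' ▸ hj i')).add_left_cancel' a
    exact Nat.ModEq.eq_of_lt_of_lt (Int.natCast_modEq_iff.mp h) (by omega) (by omega)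

lemma Int.fract_add_half_lt_half_iff (y : ℝ) :
    Int.fract (y + 1 / 2) < 1 / 2 ↔ ¬Int.fract y < 1 / 2 := by
  have h₀ := Int.fract_nonneg y
  have h₁ := Int.fract_lt_one y
  by_cases h : Int.fract y < 1 / 2
  · rw [(Int.fract_eq_iff (b := Int.fract y + 1 / 2)).mpr
      ⟨by linarith, by linarith, ⌊y⌋, by rw [← Int.self_sub_fract]; ring⟩]
    constructor <;> intro <;> linarith
  · rw [(Int.fract_eq_iff (b := Int.fract y - 1 / 2)).mpr
      ⟨by linarith, by linarith, ⌊y⌋ + 1, by push_cast; rw [← Int.self_sub_fract]; ring⟩]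
    constructor <;> intro <;> linarith

lemma lowerHalfCount_add_lowerHalfCount_add_half (α : ℝ) (q : ℕ) (x : ℝ) :
    lowerHalfCount α q x + lowerHalfCount α q (x + 1 / 2) = q := by
  have hshift : ∀ j : ℕ, x + 1 / 2 + j * α = x + j * α + 1 / 2 := fun j ↦ by ring
  simp only [lowerHalfCount, hshift, Int.fract_add_half_lt_half_iff]
  rw [card_filter_add_card_filter_not, card_range]

lemma sum_Fhalf_eq_two_mul_lowerHalfCount_sub (α : ℝ) (q : ℕ) (x : ℝ) :
    ∑ j ∈ range q, Fhalf (x + j * α) = 2 * lowerHalfCount α q x - q := by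
  have hF : ∀ y, Fhalf y = 2 * (if Int.fract y < 1 / 2 then 1 else 0) - 1 := fun y ↦ by
    unfold Fhalf; split_ifs <;> norm_num
  simp only [hF]
  rw [sum_sub_distrib, ← mul_sum, sum_boole, sum_const, card_range, nsmul_one, lowerHalfCount]

/-- If `q_n` is an odd denominator of the irrational `α` with `q_n ‖q_n α‖ < 1/2`,
then the Birkhoff sum `F^{(q_n)}` takes only the values `±1`. -/
theorem birkhoff_Fhalf_pm_one_of_odd (α : ℝ) (hα : Irrational α) (n q : ℕ)
    (hq : (q : ℝ) = (GenContFract.of α).dens n) (hodd : Odd q)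
    (hsmall : (q : ℝ) * distInt ((q : ℝ) * α) < 1/2) :
    ∀ x : ℝ,
      (∑ j ∈ Finset.range q, Fhalf (x + (j : ℝ) * α)) = 1 ∨
      (∑ j ∈ Finset.range q, Fhalf (x + (j : ℝ) * α)) = -1 := by
  obtain ⟨k, rfl⟩ := hodd
  rw [distInt_eq_abs_sub_round] at hsmall
  have hpq := GenContFract.isCoprime_round_mul_den (hα.not_terminatedAt_of n) hq hsmall
  intro x
  have hlo := le_lowerHalfCount hpq hsmall x
  have hhi := le_lowerHalfCount hpq hsmall (x + 1 / 2)
  have hsum := lowerHalfCount_add_lowerHalfCount_add_half α (2 * k + 1) x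
  rw [sum_Fhalf_eq_two_mul_lowerHalfCount_sub]
  obtain h | h : lowerHalfCount α (2 * k + 1) x = k + 1 ∨ lowerHalfCount α (2 * k + 1) x = k :=
    by omega
  · exact .inl (by rw [h]; push_cast; ring)
  · exact .inr (by rw [h]; push_cast; ring)
end

section
/- Let α be irrational with denominators (q_n) all odd for n ≥ k_0, and let φ = 1_{[0,1/2)} − 1_{[1/2,1)} on the circle. Then there is δ > 0 such that for every integer s ≥ q_{k_0}, the L²-norm of the ergodic sum φ^{(s)}(x) = ∑_{j=0}^{s−1} φ(x+jα) satisfies ‖φ^{(s)}‖₂ ≥ δ. -/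
/-! At an odd frequency `m` the Fourier coefficient of `Fhalf` is `2 / (π i m)`, so the ergodic
sum `S_s` has coefficient `2 / (π i m) · ∑_{j<s} e^{2π i j m α}`, of modulus
`(2 / (π |m|)) |sin (π s m α)| / |sin (π m α)|`; Bessel's inequality at `±m` bounds `‖S_s‖₂²`
below by twice its square. For `q_k ≤ s < q_{k+1}` both denominators are odd, and the continued fraction
inequalities `θ_k ≤ 1 / q_{k+1}` and `q_{k+1} θ_k + q_k θ_{k+1} ≤ 1` (with `θ_k = |q_k α - p_k|`)
force one of the frequencies `q_k`, `q_{k+1}` to have a coefficient of modulus at least `2 / π²`. -/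

open MeasureTheory

open Real

theorem Filter.Tendsto.exists_le_lt_succ {α : Type*} [LinearOrder α] [NoMaxOrder α] {u : ℕ → α}
    (hu : Filter.Tendsto u .atTop .atTop) {k₀ : ℕ} {x : α} (hx : u k₀ ≤ x) :
    ∃ k, k₀ ≤ k ∧ u k ≤ x ∧ x < u (k + 1) := by
  obtain ⟨N, hN⟩ := Filter.eventually_atTop.mp (hu.eventually_gt_atTop x)
  have hex : ∃ n, x < u (k₀ + n + 1) := ⟨N, hN _ (by omega)⟩
  refine ⟨k₀ + Nat.find hex, by omega, ?_, Nat.find_spec hex⟩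
  cases h : Nat.find hex with
  | zero => simpa using hx
  | succ m => exact not_lt.mp (Nat.find_min hex (by omega : m < Nat.find hex))

theorem abs_add_abs_le_one_of_abs_sub_eq_one {a b : ℝ} (h : |a - b| = 1) (ha : |a| ≤ 1)
    (hb : |b| ≤ 1) : |a| + |b| ≤ 1 := by
  rcases abs_cases a with ⟨ha', _⟩ | ⟨ha', _⟩ <;> rcases abs_cases b with ⟨hb', _⟩ | ⟨hb', _⟩ <;>
    rcases abs_cases (a - b) with ⟨h', _⟩ | ⟨h', _⟩ <;> linarith

namespace GenContFract

section Integrality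

variable {K : Type*} [Field K] [LinearOrder K] [FloorRing K]

theorem exists_int_eq_of_contsAux (v : K) (n : ℕ) :
    ∃ a b : ℤ, (GenContFract.of v).contsAux n = ⟨a, b⟩ := by
  induction n using Nat.strong_induction_on with
  | _ n ih =>
    match n with
    | 0 => exact ⟨1, 0, by simp [contsAux]⟩
    | 1 => exact ⟨⌊v⌋, 1, by simp [contsAux, of_h_eq_floor]⟩
    | n + 2 =>
      obtain ⟨a, b, hab⟩ := ih n (by omega)
      obtain ⟨a', b', hab'⟩ := ih (n + 1) (by omega)
      cases hgp : (GenContFract.of v).s.get? n with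
      | none => exact ⟨a', b', (contsAux_stable_step_of_terminated hgp).trans hab'⟩
      | some gp =>
        obtain ⟨ha, z, hz⟩ := of_partNum_eq_one_and_exists_int_partDen_eq hgp
        refine ⟨z * a' + a, z * b' + b, ?_⟩
        simp [contsAux_recurrence hgp hab hab', ha, hz]

theorem exists_int_eq_of_num (v : K) (n : ℕ) : ∃ p : ℤ, (GenContFract.of v).nums n = p := by
  obtain ⟨a, b, h⟩ := exists_int_eq_of_contsAux v (n + 1)
  exact ⟨a, by rw [num_eq_conts_a, nth_cont_eq_succ_nth_contAux, h]⟩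

theorem exists_int_eq_of_den (v : K) (n : ℕ) : ∃ q : ℤ, (GenContFract.of v).dens n = q := by
  obtain ⟨a, b, h⟩ := exists_int_eq_of_contsAux v (n + 1)
  exact ⟨b, by rw [den_eq_conts_b, nth_cont_eq_succ_nth_contAux, h]⟩

end Integrality

variable {α : ℝ}

theorem not_terminatedAt_of_irrational (hα : Irrational α) (n : ℕ) :
    ¬(GenContFract.of α).TerminatedAt n := fun h ↦
  let ⟨q, hq⟩ := (terminates_iff_rat α).mp ⟨n, h⟩
  hα ⟨q, hq.symm⟩

theorem fib_succ_le_of_den (hα : Irrational α) (n : ℕ) :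
    (Nat.fib (n + 1) : ℝ) ≤ (GenContFract.of α).dens n :=
  succ_nth_fib_le_of_nth_den <| by
    cases n with
    | zero => exact Or.inl rfl
    | succ m => exact Or.inr (not_terminatedAt_of_irrational hα m)

theorem one_le_of_den_s13 (hα : Irrational α) (n : ℕ) : 1 ≤ (GenContFract.of α).dens n :=
  (Nat.one_le_cast.mpr (Nat.fib_pos.mpr n.succ_pos)).trans (fib_succ_le_of_den hα n)

theorem tendsto_of_den_atTop (hα : Irrational α) :
    Filter.Tendsto (GenContFract.of α).dens .atTop .atTop := by
  have hfib : Filter.Tendsto (fun n ↦ Nat.fib (n + 1)) .atTop .atTop :=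
    (Filter.tendsto_add_atTop_iff_nat 1).mp Nat.fib_add_two_strictMono.tendsto_atTop
  exact Filter.tendsto_atTop_mono (fib_succ_le_of_den hα) (tendsto_natCast_atTop_iff.mpr hfib)

theorem of_den_mul_sub_num_ne_zero (hα : Irrational α) (n : ℕ) :
    (GenContFract.of α).dens n * α - (GenContFract.of α).nums n ≠ 0 := by
  obtain ⟨p, hp⟩ := exists_int_eq_of_num α n
  obtain ⟨q, hq⟩ := exists_int_eq_of_den α n
  have hq0 : q ≠ 0 := by
    have := one_le_of_den_s13 hα n
    rintro rfl
    norm_num [hq] at this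
  rw [hp, hq, sub_ne_zero]
  exact (hα.intCast_mul hq0).ne_int p

theorem abs_of_den_mul_sub_num_le (hα : Irrational α) (n : ℕ) :
    |(GenContFract.of α).dens n * α - (GenContFract.of α).nums n|
      ≤ 1 / (GenContFract.of α).dens (n + 1) := by
  have hq := one_le_of_den_s13 hα n
  have hq' := one_le_of_den_s13 hα (n + 1)
  have h := abs_sub_convs_le (not_terminatedAt_of_irrational hα n)
  rw [conv_eq_num_div_den] at h
  have hq0 : 0 < (GenContFract.of α).dens n := by linarith
  calc |(GenContFract.of α).dens n * α - (GenContFract.of α).nums n|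
      = |(GenContFract.of α).dens n
          * (α - (GenContFract.of α).nums n / (GenContFract.of α).dens n)| := by
        rw [mul_sub, mul_div_cancel₀ _ hq0.ne']
    _ = (GenContFract.of α).dens n
          * |α - (GenContFract.of α).nums n / (GenContFract.of α).dens n| := by
        rw [abs_mul, abs_of_pos hq0]
    _ ≤ (GenContFract.of α).dens n
          * (1 / ((GenContFract.of α).dens n * (GenContFract.of α).dens (n + 1))) := by
        gcongr
    _ = 1 / (GenContFract.of α).dens (n + 1) := by field_simp

theorem of_den_succ_mul_abs_add_of_den_mul_abs_le_one (hα : Irrational α) (n : ℕ) :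
    (GenContFract.of α).dens (n + 1)
        * |(GenContFract.of α).dens n * α - (GenContFract.of α).nums n|
      + (GenContFract.of α).dens n
        * |(GenContFract.of α).dens (n + 1) * α - (GenContFract.of α).nums (n + 1)| ≤ 1 := by
  have hdet := SimpContFract.determinant (s := ⟨_, of_isSimpContFract α⟩)
    (not_terminatedAt_of_irrational hα n)
  set q := (GenContFract.of α).dens n
  set q' := (GenContFract.of α).dens (n + 1)
  set ε := q * α - (GenContFract.of α).nums n
  set ε' := q' * α - (GenContFract.of α).nums (n + 1)
  have hq : 1 ≤ q := one_le_of_den_s13 hα n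
  have hq' : 1 ≤ q' := one_le_of_den_s13 hα (n + 1)
  have hdiff : |q' * ε - q * ε'| = 1 := by
    rw [show q' * ε - q * ε'
        = -((GenContFract.of α).nums n * q' - q * (GenContFract.of α).nums (n + 1)) by ring,
      abs_neg, hdet, abs_pow, abs_neg, abs_one, one_pow]
  have ha : |q' * ε| ≤ 1 := by
    rw [abs_mul, abs_of_pos (by linarith)]
    calc q' * |ε| ≤ q' * (1 / q') := by gcongr; exact abs_of_den_mul_sub_num_le hα n
      _ = 1 := by field_simp
  have hb : |q * ε'| ≤ 1 := by
    have hq'' : q ≤ (GenContFract.of α).dens (n + 2) := of_den_mono.trans of_den_mono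
    rw [abs_mul, abs_of_pos (by linarith)]
    calc q * |ε'| ≤ q * (1 / (GenContFract.of α).dens (n + 2)) := by
          gcongr; exact abs_of_den_mul_sub_num_le hα (n + 1)
      _ ≤ 1 := by rw [mul_one_div, div_le_one (by linarith)]; exact hq''
  have := abs_add_abs_le_one_of_abs_sub_eq_one hdiff ha hb
  rwa [abs_mul, abs_mul, abs_of_pos (by linarith : 0 < q'), abs_of_pos (by linarith : 0 < q)]
    at this

end GenContFract

/-- `‖∑_{j<s} e^{2πijx}‖` when `sin (π x) ≠ 0`; the junk value `0` otherwise. -/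
noncomputable def sinRatio (s x : ℝ) : ℝ := |sin (π * (s * x))| / |sin (π * x)|

theorem abs_sin_sub_int_mul_pi (x : ℝ) (n : ℤ) : |sin (x - n * π)| = |sin x| := by
  rw [sin_sub_int_mul_pi, abs_mul, abs_zpow, abs_neg, abs_one, one_zpow, one_mul]

theorem sinRatio_neg (s x : ℝ) : sinRatio s (-x) = sinRatio s x := by
  simp only [sinRatio, mul_neg, sin_neg, abs_neg]

theorem sinRatio_abs (s x : ℝ) : sinRatio s |x| = sinRatio s x := by
  rcases abs_choice x with h | h <;> rw [h]
  exact sinRatio_neg s x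

theorem sinRatio_sub_intCast (s : ℕ) (x : ℝ) (p : ℤ) : sinRatio s (x - p) = sinRatio s x := by
  have h : π * (s * (x - p)) = π * (s * x) - ((s * p : ℤ) : ℝ) * π := by push_cast; ring
  rw [sinRatio, sinRatio, h, abs_sin_sub_int_mul_pi, mul_sub, mul_comm π (p : ℝ),
    abs_sin_sub_int_mul_pi]

theorem two_mul_le_sin_pi_mul {t : ℝ} (h₀ : 0 ≤ t) (h₁ : t ≤ 1 / 2) : 2 * t ≤ sin (π * t) := by
  have := mul_le_sin (x := π * t) (by positivity) (by nlinarith [pi_pos])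
  rwa [← mul_assoc, div_mul_cancel₀ _ pi_ne_zero] at this

theorem two_div_pi_sq_le_of_mul_le_abs_sin {q s θ : ℝ} (hq : 0 < q) (hθ : 0 < θ) (hθ₁ : θ < 1)
    (h : q * θ ≤ |sin (π * (s * θ))|) : 2 / π ^ 2 ≤ 2 / (π * q) * sinRatio s θ := by
  have hsin : 0 < sin (π * θ) := sin_pos_of_pos_of_lt_pi (by positivity) (by nlinarith [pi_pos])
  have hsin_le : sin (π * θ) ≤ π * θ := sin_le (by positivity)
  calc 2 / π ^ 2 = 2 / (π * q) * (q * θ / (π * θ)) := by field_simp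
    _ ≤ 2 / (π * q) * sinRatio s θ := by
      rw [sinRatio, abs_of_pos hsin]
      gcongr

theorem two_div_pi_sq_le_max_sinRatio {q q' s θ θ' : ℝ} (hq : 1 ≤ q) (hqs : q ≤ s)
    (hsq' : s + 1 ≤ q') (hθ : 0 < θ) (hθ' : 0 < θ') (hθq' : θ ≤ 1 / q')
    (hkey : q' * θ + q * θ' ≤ 1) :
    2 / π ^ 2 ≤ max (2 / (π * q) * sinRatio s θ) (2 / (π * q') * sinRatio s θ') := by
  have hsθ : s * θ ≤ s / q' := by
    calc s * θ ≤ s * (1 / q') := by gcongr; linarith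
      _ = s / q' := mul_one_div s q'
  by_cases hA : s * θ ≤ 1 / 2
  · refine le_max_of_le_left
      (two_div_pi_sq_le_of_mul_le_abs_sin (by linarith) hθ (by nlinarith) ?_)
    calc q * θ ≤ 2 * (s * θ) := by nlinarith
      _ ≤ |sin (π * (s * θ))| :=
        (two_mul_le_sin_pi_mul (by nlinarith) hA).trans (le_abs_self _)
  have hq's : q' < 2 * s := by
    push Not at hA
    rw [le_div_iff₀ (by linarith)] at hsθ
    nlinarith
  by_cases hB : s * θ' ≤ 1 / 2
  · refine le_max_of_le_right
      (two_div_pi_sq_le_of_mul_le_abs_sin (by linarith) hθ' (by nlinarith) ?_)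
    calc q' * θ' ≤ 2 * (s * θ') := by nlinarith
      _ ≤ |sin (π * (s * θ'))| :=
        (two_mul_le_sin_pi_mul (by nlinarith) hB).trans (le_abs_self _)
  push Not at hA hB
  have hθ₁ : θ < 1 := by
    calc θ ≤ 1 / q' := hθq'
      _ < 1 := by rw [div_lt_one (by linarith)]; linarith
  -- `θ ≤ 1/q' < 1/s < 2θ'`, and `1 - sθ ≥ 1 - (q' - 1)θ ≥ qθ' + θ > qθ/2 + θ`.
  have hθθ' : θ < 2 * θ' := by nlinarith
  have hgap : q * θ ≤ 2 * (1 - s * θ) := by nlinarith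
  refine le_max_of_le_left (two_div_pi_sq_le_of_mul_le_abs_sin (by linarith) hθ hθ₁ ?_)
  calc q * θ ≤ 2 * (1 - s * θ) := hgap
    _ ≤ sin (π * (1 - s * θ)) := two_mul_le_sin_pi_mul (by nlinarith) (by linarith)
    _ = |sin (π * (s * θ))| := by
      rw [mul_sub, mul_one, sin_pi_sub, abs_of_nonneg]
      have : s * θ ≤ 1 := by nlinarith
      exact sin_nonneg_of_nonneg_of_le_pi (by nlinarith [pi_pos])
        (mul_le_of_le_one_right pi_pos.le this)

theorem Fhalf_periodic : Function.Periodic Fhalf 1 := fun x ↦ by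
  simp only [Fhalf, Int.fract_add_one]

@[fun_prop]
theorem measurable_Fhalf : Measurable Fhalf := by
  unfold Fhalf
  exact Measurable.ite (measurableSet_lt measurable_fract measurable_const) measurable_const
    measurable_const

theorem abs_Fhalf (x : ℝ) : |Fhalf x| = 1 := by
  unfold Fhalf; split <;> simp

theorem intervalIntegrable_Fhalf_comp_add (t a b : ℝ) :
    IntervalIntegrable (fun x ↦ (Fhalf (x + t) : ℂ)) volume a b :=
  (intervalIntegrable_const (c := (1 : ℝ))).mono_fun'
    (measurable_Fhalf.comp (measurable_add_const t)).complex_ofReal.aestronglyMeasurable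
    (ae_of_all _ fun x ↦ by simp [abs_Fhalf])

section Fourier

open Complex (I)
open scoped Complex

theorem fourierCoeffOn_comp_add {E : Type*} [NormedAddCommGroup E] [NormedSpace ℂ E] {a b : ℝ}
    (hab : a < b) {f : ℝ → E} (hf : Function.Periodic f (b - a)) (t : ℝ) (n : ℤ) :
    fourierCoeffOn hab (fun x ↦ f (x + t)) n
      = fourier n (t : AddCircle (b - a)) • fourierCoeffOn hab f n := by
  set g : ℝ → E := fun x ↦ fourier (-n) (x : AddCircle (b - a)) • f x
  have hg : Function.Periodic g (b - a) := fun x ↦ by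
    simp only [g, AddCircle.coe_add_period, hf x]
  have hshift (x : ℝ) : fourier (-n) (x : AddCircle (b - a)) • f (x + t)
      = fourier n (t : AddCircle (b - a)) • g (x + t) := by
    simp only [g, smul_smul, fourier_coe_apply, ← Complex.exp_add]
    congr 3
    push_cast
    ring
  simp only [fourierCoeffOn_eq_integral, hshift, intervalIntegral.integral_smul,
    intervalIntegral.integral_comp_add_right g t]
  rw [show b + t = a + t + (b - a) by ring, hg.intervalIntegral_add_eq (a + t) a,
    add_sub_cancel, smul_comm]

theorem fourierCoeffOn_Fhalf {n : ℤ} (hn : Odd n) :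
    fourierCoeffOn zero_lt_one (fun x ↦ (Fhalf x : ℂ)) n = 2 / (π * I * n) := by
  set c : ℂ := -2 * π * I * n
  have hn0 : (n : ℂ) ≠ 0 := Int.cast_ne_zero.mpr (by rintro rfl; simp at hn)
  have hc : c ≠ 0 := by simp [c, pi_ne_zero, Complex.I_ne_zero, hn0]
  have hexp (x : ℝ) : fourier (-n) (x : AddCircle (1 - 0 : ℝ)) = cexp (c * x) := by
    rw [fourier_coe_apply]; congr 1; push_cast; ring
  have hhalf : cexp (c * (1 / 2 : ℝ)) = -1 := by
    rw [show c * (1 / 2 : ℝ) = (-n : ℤ) * (π * I) by push_cast; ring, Complex.exp_int_mul,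
      Complex.exp_pi_mul_I]
    exact hn.neg.neg_one_zpow
  have hone : cexp (c * (1 : ℝ)) = 1 := by
    rw [show c * (1 : ℝ) = (-n : ℤ) * (2 * π * I) by push_cast; ring,
      Complex.exp_int_mul_two_pi_mul_I]
  have hint (a b : ℝ) : IntervalIntegrable (fun x : ℝ ↦ cexp (c * x) * Fhalf x) volume a b := by
    simpa using (intervalIntegrable_Fhalf_comp_add 0 a b).continuousOn_mul (by fun_prop)
  have hleft : ∫ x in (0 : ℝ)..1 / 2, cexp (c * x) * Fhalf x
      = ∫ x in (0 : ℝ)..1 / 2, cexp (c * x) := by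
    refine intervalIntegral.integral_congr_Ioo_of_le (by norm_num) fun x hx ↦ ?_
    simp [Fhalf, Int.fract_eq_self.mpr ⟨hx.1.le, by linarith [hx.2]⟩,
      show x < 2⁻¹ by linarith [hx.2]]
  have hright : ∫ x in (1 / 2 : ℝ)..1, cexp (c * x) * Fhalf x
      = -∫ x in (1 / 2 : ℝ)..1, cexp (c * x) := by
    rw [← intervalIntegral.integral_neg]
    refine intervalIntegral.integral_congr_Ioo_of_le (by norm_num) fun x hx ↦ ?_
    simp [Fhalf, Int.fract_eq_self.mpr ⟨by linarith [hx.1], hx.2⟩,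
      show ¬x < 2⁻¹ by linarith [hx.1]]
  simp only [fourierCoeffOn_eq_integral, hexp, smul_eq_mul]
  rw [← intervalIntegral.integral_add_adjacent_intervals (hint 0 (1 / 2)) (hint (1 / 2) 1), hleft,
    hright, integral_exp_mul_complex hc, integral_exp_mul_complex hc, hhalf, hone, sub_zero,
    div_one, one_smul, Complex.ofReal_zero, mul_zero, Complex.exp_zero]
  field_simp
  ring

theorem fourierCoeffOn_sum {E : Type*} [NormedAddCommGroup E] [NormedSpace ℂ E] {a b : ℝ}
    (hab : a < b) {ι : Type*} (s : Finset ι) {f : ι → ℝ → E}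
    (hf : ∀ i ∈ s, IntervalIntegrable (f i) volume a b) (n : ℤ) :
    fourierCoeffOn hab (fun x ↦ ∑ i ∈ s, f i x) n = ∑ i ∈ s, fourierCoeffOn hab (f i) n := by
  have hcont : ContinuousOn (fun x : ℝ ↦ fourier (-n) (x : AddCircle (b - a))) (Set.uIcc a b) :=
    ((map_continuous _).comp (AddCircle.continuous_mk' _)).continuousOn
  simp only [fourierCoeffOn_eq_integral, Finset.smul_sum]
  rw [intervalIntegral.integral_finsetSum fun i hi ↦ (hf i hi).continuousOn_smul hcont,
    Finset.smul_sum]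

theorem norm_exp_two_pi_I_mul_sub_one (x : ℝ) :
    ‖cexp (2 * π * I * x) - 1‖ = 2 * |sin (π * x)| := by
  rw [show 2 * π * I * x = I * (2 * π * x : ℝ) by push_cast; ring,
    Complex.norm_exp_I_mul_ofReal_sub_one, norm_mul, Real.norm_two, Real.norm_eq_abs]
  ring_nf

theorem norm_sum_range_exp_eq_sinRatio (s : ℕ) {x : ℝ} (hx : sin (π * x) ≠ 0) :
    ‖∑ j ∈ Finset.range s, cexp (2 * π * I * (j * x))‖ = sinRatio s x := by
  have hz₁ := norm_exp_two_pi_I_mul_sub_one x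
  set z := cexp (2 * π * I * x)
  have hz : z ≠ 1 := fun h ↦ hx <| by simpa [h] using hz₁
  have hpow (j : ℕ) : cexp (2 * π * I * (j * x)) = z ^ j := by
    rw [← Complex.exp_nat_mul]; ring_nf
  have hzs : z ^ s = cexp (2 * π * I * ((s * x : ℝ) : ℂ)) := by rw [← hpow]; push_cast; rfl
  simp only [hpow, geom_sum_eq hz, norm_div, hzs, norm_exp_two_pi_I_mul_sub_one, hz₁, sinRatio]
  exact mul_div_mul_left _ _ two_ne_zero

theorem sq_norm_fourierCoeffOn_add_sq_norm_neg_le {a b : ℝ} (hab : a < b) {f : ℝ → ℂ}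
    (hf : MemLp f 2 (volume.restrict (Set.Ioc a b))) {n : ℤ} (hn : n ≠ 0) :
    ‖fourierCoeffOn hab f n‖ ^ 2 + ‖fourierCoeffOn hab f (-n)‖ ^ 2
      ≤ (b - a)⁻¹ • ∫ x in a..b, ‖f x‖ ^ 2 := by
  have := sum_le_hasSum {n, -n} (fun _ _ ↦ by positivity) (hasSum_sq_fourierCoeffOn hab hf)
  rwa [Finset.sum_pair (by omega)] at this

theorem norm_fourierCoeffOn_sum_Fhalf {α : ℝ} (hα : Irrational α) (s : ℕ) {n : ℤ}
    (hn : Odd n) :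
    ‖fourierCoeffOn zero_lt_one
        (fun x ↦ ((∑ j ∈ Finset.range s, Fhalf (x + j * α) : ℝ) : ℂ)) n‖
      = 2 / (π * |n|) * sinRatio s (n * α) := by
  have hn0 : n ≠ 0 := by rintro rfl; simp at hn
  have hsin : sin (π * (n * α)) ≠ 0 := by
    rw [Ne, sin_eq_zero_iff]
    rintro ⟨k, hk⟩
    exact (hα.intCast_mul hn0).ne_int k (mul_left_cancel₀ pi_ne_zero (by linarith))
  have hcoeff : fourierCoeffOn zero_lt_one
      (fun x ↦ ((∑ j ∈ Finset.range s, Fhalf (x + j * α) : ℝ) : ℂ)) n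
      = ∑ j ∈ Finset.range s, cexp (2 * π * I * (j * (n * α : ℝ))) * (2 / (π * I * n)) := by
    push_cast
    rw [fourierCoeffOn_sum _ _ fun j _ ↦ intervalIntegrable_Fhalf_comp_add _ _ _]
    refine Finset.sum_congr rfl fun j _ ↦ ?_
    rw [fourierCoeffOn_comp_add zero_lt_one (f := fun x ↦ (Fhalf x : ℂ))
      (fun x ↦ by simp [Fhalf_periodic x]), fourierCoeffOn_Fhalf hn, fourier_coe_apply,
      smul_eq_mul]
    congr 2
    push_cast
    ring
  rw [hcoeff, ← Finset.sum_mul, norm_mul, norm_sum_range_exp_eq_sinRatio s hsin, mul_comm]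
  simp [Complex.norm_real, abs_of_pos pi_pos]

theorem two_mul_sq_le_integral_sum_Fhalf {α : ℝ} (hα : Irrational α) (s : ℕ) {n : ℤ}
    (hn : Odd n) :
    2 * (2 / (π * |n|) * sinRatio s (n * α)) ^ 2
      ≤ ∫ x in Set.Ico (0 : ℝ) 1, (∑ j ∈ Finset.range s, Fhalf (x + j * α)) ^ 2 := by
  set S : ℝ → ℝ := fun x ↦ ∑ j ∈ Finset.range s, Fhalf (x + j * α)
  have hS : MemLp (fun x ↦ (S x : ℂ)) 2 (volume.restrict (Set.Ioc 0 1)) := by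
    refine MemLp.of_bound (by fun_prop) s (ae_of_all _ fun x ↦ ?_)
    rw [Complex.norm_real, Real.norm_eq_abs]
    refine (Finset.abs_sum_le_sum_abs _ _).trans ?_
    simp [abs_Fhalf]
  have hbessel := sq_norm_fourierCoeffOn_add_sq_norm_neg_le zero_lt_one hS (n := n)
    (by rintro rfl; simp at hn)
  rw [norm_fourierCoeffOn_sum_Fhalf hα s hn, norm_fourierCoeffOn_sum_Fhalf hα s hn.neg, abs_neg,
    Int.cast_neg, neg_mul, sinRatio_neg] at hbessel
  convert hbessel using 1
  · ring
  · simp only [Complex.norm_real, Real.norm_eq_abs, sq_abs]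
    simp [intervalIntegral.integral_of_le, integral_Ico_eq_integral_Ioo,
      integral_Ioc_eq_integral_Ioo]
    rfl

end Fourier

theorem two_mul_sq_le_integral_sum_Fhalf_of_den_odd {α : ℝ} (hα : Irrational α) (s : ℕ)
    {n : ℕ} (hodd : ∃ k : ℕ, (GenContFract.of α).dens n = 2 * (k : ℝ) + 1) :
    2 * (2 / (π * (GenContFract.of α).dens n)
        * sinRatio s |(GenContFract.of α).dens n * α - (GenContFract.of α).nums n|) ^ 2
      ≤ ∫ x in Set.Ico (0 : ℝ) 1, (∑ j ∈ Finset.range s, Fhalf (x + j * α)) ^ 2 := by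
  obtain ⟨k, hk⟩ := hodd
  obtain ⟨p, hp⟩ := GenContFract.exists_int_eq_of_num α n
  have := two_mul_sq_le_integral_sum_Fhalf hα s (odd_two_mul_add_one (k : ℤ))
  push_cast at this
  rw [abs_of_pos (by positivity : (0 : ℝ) < 2 * k + 1)] at this
  rwa [hk, hp, sinRatio_abs, sinRatio_sub_intCast]

/-- If the denominators `q_n` of the irrational `α` are odd for all `n ≥ k₀`, then
there is `δ > 0` such that for every integer `s ≥ q_{k₀}` the `L²`-norm of the
ergodic sum `φ^{(s)}` is at least `δ`. -/
theorem birkhoff_Fhalf_L2_lower_bound (α : ℝ) (hα : Irrational α) (k0 : ℕ)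
    (hodd : ∀ n : ℕ, k0 ≤ n → ∃ k : ℕ, (GenContFract.of α).dens n = 2 * (k : ℝ) + 1) :
    ∃ δ : ℝ, 0 < δ ∧ ∀ s : ℕ, (GenContFract.of α).dens k0 ≤ (s : ℝ) →
      δ ≤ Real.sqrt
          (∫ x in Set.Ico (0 : ℝ) 1,
            (∑ j ∈ Finset.range s, Fhalf (x + (j : ℝ) * α)) ^ 2) := by
  refine ⟨2 / π ^ 2, by positivity, fun s hs ↦ Real.le_sqrt_of_sq_le ?_⟩
  obtain ⟨k, hk0, hqs, hsq⟩ := (GenContFract.tendsto_of_den_atTop hα).exists_le_lt_succ hs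
  have hs₁ : (s : ℝ) + 1 ≤ (GenContFract.of α).dens (k + 1) := by
    obtain ⟨b, hb⟩ := hodd (k + 1) (by omega)
    rw [hb] at hsq ⊢
    exact_mod_cast (by exact_mod_cast hsq : s < 2 * b + 1)
  have hA := two_mul_sq_le_integral_sum_Fhalf_of_den_odd hα s (hodd k hk0)
  have hB := two_mul_sq_le_integral_sum_Fhalf_of_den_odd hα s (hodd (k + 1) (by omega))
  have hmax := two_div_pi_sq_le_max_sinRatio (GenContFract.one_le_of_den_s13 hα k) hqs hs₁
    (abs_pos.mpr (GenContFract.of_den_mul_sub_num_ne_zero hα k))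
    (abs_pos.mpr (GenContFract.of_den_mul_sub_num_ne_zero hα (k + 1)))
    (GenContFract.abs_of_den_mul_sub_num_le hα k)
    (GenContFract.of_den_succ_mul_abs_add_of_den_mul_abs_le_one hα k)
  rcases le_max_iff.mp hmax with h | h <;>
    nlinarith [pow_le_pow_left₀ (by positivity : (0 : ℝ) ≤ 2 / π ^ 2) h 2]
end
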